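/- arXiv:1209.0812 — 2 statements merged into one kernel-verified Lean document; each statement's English description precedes it below -/
import Mathlib

section
/- Let p and q be nonzero multivariate polynomials in MvPolynomial (Fin d) ℝ all of whose nonzero coefficients are positive, and let x : Fin d → ℝ((t)) be such that each xᵢ is nonzero with positive leading coefficient. Then the rational value p(x)/q(x) is a nonzero Laurent series with positive leading coefficient, and ord(p(x)/q(x)) = (min_{α ∈ supp p} Σᵢ αᵢ ord(xᵢ)) − (min_{β ∈ supp q} Σᵢ βᵢ ord(xᵢ)). Equivalently, the negative valuation of any subtraction-free rational expression in elements of 𝕂₊ equals the corresponding tropical (piecewise-linear) expression in the negative valuations; hence positive rational transition functions transform −val tropically. -/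
/-!
Series with positive leading coefficient are exactly the positive elements of the
lexicographically ordered ring `Lex R⟦Γ⟧`, so no cancellation occurs among them: a finite sum of
such series again has positive leading coefficient, and its order is the minimum of the orders.
Expanding `p(x)` as `∑ α ∈ supp p, c_α x^α`, each term has positive leading coefficient and order
`∑ i, α i • ord (x i)`, so `ord p(x)` is the tropical value of `p`; leading coefficients and
orders are multiplicative, resp. additive, which settles the quotient `p(x)/q(x)`.
-/

namespace HahnSeries

variable {Γ R : Type*}

section Add

variable [LinearOrder Γ]

theorem coeff_nonneg_of_le_order [Zero Γ] [Zero R] [Preorder R] {x : R⟦Γ⟧}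
    (hx : 0 ≤ x.leadingCoeff) {g : Γ} (hg : g ≤ x.order) : 0 ≤ x.coeff g := by
  rcases hg.lt_or_eq with hg | rfl
  · rw [coeff_eq_zero_of_lt_order hg]
  · rwa [← leadingCoeff_eq]

variable [AddCommGroup R] [LinearOrder R] [IsOrderedAddMonoid R]

theorem leadingCoeff_sum_pos {ι : Type*} {s : Finset ι} (hs : s.Nonempty) {f : ι → R⟦Γ⟧}
    (hf : ∀ i ∈ s, 0 < (f i).leadingCoeff) : 0 < (∑ i ∈ s, f i).leadingCoeff :=
  leadingCoeff_pos_iff (x := toLex (∑ i ∈ s, f i)) |>.mpr <|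
    Finset.sum_pos (f := fun i ↦ toLex (f i)) (fun i hi ↦ leadingCoeff_pos_iff.mp (hf i hi)) hs

variable [Zero Γ]

theorem order_add_of_leadingCoeff_pos {x y : R⟦Γ⟧} (hx : 0 < x.leadingCoeff)
    (hy : 0 < y.leadingCoeff) : (x + y).order = min x.order y.order := by
  have hcoeff : 0 < (x + y).coeff (min x.order y.order) := by
    have hx' := coeff_nonneg_of_le_order hx.le (min_le_left x.order y.order)
    have hy' := coeff_nonneg_of_le_order hy.le (min_le_right x.order y.order)
    rw [coeff_add]
    rcases min_choice x.order y.order with h | h <;> rw [h] at hx' hy' ⊢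
    · exact add_pos_of_pos_of_nonneg (by rwa [← leadingCoeff_eq]) hy'
    · exact add_pos_of_nonneg_of_pos hx' (by rwa [← leadingCoeff_eq])
  exact le_antisymm (order_le_of_coeff_ne_zero hcoeff.ne')
    (min_order_le_order_add (ne_zero_of_coeff_ne_zero (x := x + y) hcoeff.ne'))

theorem order_sum_of_leadingCoeff_pos {ι : Type*} {s : Finset ι} (hs : s.Nonempty)
    {f : ι → R⟦Γ⟧} (hf : ∀ i ∈ s, 0 < (f i).leadingCoeff) :
    (∑ i ∈ s, f i).order = s.inf' hs fun i ↦ (f i).order := by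
  induction hs using Finset.Nonempty.cons_induction with
  | singleton a => simp
  | cons a s ha hs ih =>
    have hfs : ∀ i ∈ s, 0 < (f i).leadingCoeff := fun i hi ↦ hf i (Finset.mem_cons_of_mem hi)
    rw [Finset.sum_cons, Finset.inf'_cons, order_add_of_leadingCoeff_pos
      (hf a (Finset.mem_cons_self a s)) (leadingCoeff_sum_pos hs hfs), ih hfs]

end Add

section Mul

variable [AddCommMonoid Γ] [LinearOrder Γ] [IsOrderedCancelAddMonoid Γ]

theorem order_prod [CommSemiring R] [NoZeroDivisors R] [Nontrivial R] {ι : Type*} (s : Finset ι)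
    {f : ι → R⟦Γ⟧} (hf : ∀ i ∈ s, f i ≠ 0) : (∏ i ∈ s, f i).order = ∑ i ∈ s, (f i).order := by
  induction s using Finset.cons_induction with
  | empty => simp
  | cons a s ha ih =>
    have hfs : ∀ i ∈ s, f i ≠ 0 := fun i hi ↦ hf i (Finset.mem_cons_of_mem hi)
    rw [Finset.prod_cons, Finset.sum_cons, order_mul (hf a (Finset.mem_cons_self a s))
      (Finset.prod_ne_zero_iff.mpr hfs), ih hfs]

variable [CommRing R] [LinearOrder R] [IsStrictOrderedRing R] {σ : Type*} [Fintype σ]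

theorem leadingCoeff_C_mul_prod_pow_pos {c : R} (hc : 0 < c) {x : σ → R⟦Γ⟧}
    (hx : ∀ i, 0 < (x i).leadingCoeff) (n : σ → ℕ) :
    0 < (C c * ∏ i, x i ^ n i).leadingCoeff := by
  have hlex : ∀ y : R⟦Γ⟧, 0 < y.leadingCoeff ↔ 0 < toLex y :=
    fun y ↦ leadingCoeff_pos_iff (x := toLex y)
  have hC : 0 < (C c : R⟦Γ⟧).leadingCoeff := by rwa [C_apply, leadingCoeff_of_single]
  simp only [hlex] at hx hC ⊢
  exact mul_pos hC (Finset.prod_pos fun i _ ↦ pow_pos (hx i) (n i))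

theorem order_C_mul_prod_pow {c : R} (hc : c ≠ 0) {x : σ → R⟦Γ⟧} (hx : ∀ i, x i ≠ 0)
    (n : σ → ℕ) : (C c * ∏ i, x i ^ n i).order = ∑ i, n i • (x i).order := by
  have hpow : ∀ i ∈ Finset.univ, x i ^ n i ≠ 0 := fun i _ ↦ pow_ne_zero _ (hx i)
  rw [order_mul (C_ne_zero hc) (Finset.prod_ne_zero_iff.mpr hpow), order_C, zero_add,
    order_prod _ hpow]
  simp only [order_pow]

theorem leadingCoeff_eval₂_C_pos {p : MvPolynomial σ R} (hp : p ≠ 0)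
    (hpos : ∀ α ∈ p.support, 0 < p.coeff α) {x : σ → R⟦Γ⟧} (hx : ∀ i, 0 < (x i).leadingCoeff) :
    0 < (p.eval₂ C x).leadingCoeff := by
  rw [MvPolynomial.eval₂_eq']
  exact leadingCoeff_sum_pos (MvPolynomial.support_nonempty.mpr hp)
    fun α hα ↦ leadingCoeff_C_mul_prod_pow_pos (hpos α hα) hx α

theorem order_eval₂_C {p : MvPolynomial σ R} (hp : p ≠ 0)
    (hpos : ∀ α ∈ p.support, 0 < p.coeff α) {x : σ → R⟦Γ⟧} (hx : ∀ i, 0 < (x i).leadingCoeff) :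
    (p.eval₂ C x).order = p.support.inf' (MvPolynomial.support_nonempty.mpr hp)
      fun α ↦ ∑ i, α i • (x i).order := by
  rw [MvPolynomial.eval₂_eq', order_sum_of_leadingCoeff_pos (MvPolynomial.support_nonempty.mpr hp)
    fun α hα ↦ leadingCoeff_C_mul_prod_pow_pos (hpos α hα) hx α]
  exact Finset.inf'_congr _ rfl fun α hα ↦
    order_C_mul_prod_pow (hpos α hα).ne' (fun i ↦ leadingCoeff_ne_zero.mp (hx i).ne') α

end Mul

section Div

variable [AddCommGroup Γ] [LinearOrder Γ] [IsOrderedAddMonoid Γ] [Field R]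

theorem leadingCoeff_div (x y : R⟦Γ⟧) : (x / y).leadingCoeff = x.leadingCoeff / y.leadingCoeff := by
  rcases eq_or_ne y 0 with rfl | hy
  · simp
  · rw [eq_div_iff (leadingCoeff_ne_zero.mpr hy), ← leadingCoeff_mul, div_mul_cancel₀ x hy]

theorem order_div {x y : R⟦Γ⟧} (hx : x ≠ 0) (hy : y ≠ 0) : (x / y).order = x.order - y.order := by
  rw [eq_sub_iff_add_eq, ← order_mul (div_ne_zero hx hy) hy, div_mul_cancel₀ x hy]

end Div

end HahnSeries

open HahnSeries

theorem LaurentSeries.algebraMap_eq_C {R : Type*} [CommSemiring R] :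
    algebraMap R (LaurentSeries R) = C := by
  ext r : 1
  simp [HahnSeries.algebraMap_apply']

theorem laurent_eval_pos_rational_order_general {d : ℕ} (p q : MvPolynomial (Fin d) ℝ)
    (hp : p ≠ 0) (hq : q ≠ 0)
    (hppos : ∀ α ∈ p.support, 0 < p.coeff α)
    (hqpos : ∀ β ∈ q.support, 0 < q.coeff β)
    (x : Fin d → LaurentSeries ℝ)
    (hx' : ∀ i, 0 < (x i).coeff (x i).order) :
    MvPolynomial.aeval x p / MvPolynomial.aeval x q ≠ 0 ∧
      0 < (MvPolynomial.aeval x p / MvPolynomial.aeval x q).coeff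
            (MvPolynomial.aeval x p / MvPolynomial.aeval x q).order ∧
      (MvPolynomial.aeval x p / MvPolynomial.aeval x q).order =
        p.support.inf' (MvPolynomial.support_nonempty.mpr hp)
            (fun α => ∑ i, (α i : ℤ) * (x i).order) -
          q.support.inf' (MvPolynomial.support_nonempty.mpr hq)
            (fun β => ∑ i, (β i : ℤ) * (x i).order) := by
  have hx : ∀ i, 0 < (x i).leadingCoeff := fun i ↦ by rw [leadingCoeff_eq]; exact hx' i
  have hP := leadingCoeff_eval₂_C_pos hp hppos hx
  have hQ := leadingCoeff_eval₂_C_pos hq hqpos hx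
  have hPQ : 0 < (p.eval₂ C x / q.eval₂ C x).leadingCoeff := by
    rw [leadingCoeff_div]
    exact div_pos hP hQ
  simp only [MvPolynomial.aeval_def, LaurentSeries.algebraMap_eq_C, ← leadingCoeff_eq]
  refine ⟨leadingCoeff_ne_zero.mp hPQ.ne', hPQ, ?_⟩
  rw [order_div (leadingCoeff_ne_zero.mp hP.ne') (leadingCoeff_ne_zero.mp hQ.ne'),
    order_eval₂_C hp hppos hx, order_eval₂_C hq hqpos hx]
  simp only [nsmul_eq_mul]

/-- Subtraction-free rational expressions in elements of `𝕂₊` transform tropically under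
`-val`: if `p`, `q` are nonzero polynomials with positive coefficients and each `x i` is a
nonzero Laurent series with positive leading coefficient, then `p(x)/q(x)` is nonzero with
positive leading coefficient, and its order is the difference of the tropical values of
`p` and `q` at the orders of the `x i`. -/
theorem laurent_eval_pos_rational_order {d : ℕ} (p q : MvPolynomial (Fin d) ℝ)
    (hp : p ≠ 0) (hq : q ≠ 0)
    (hppos : ∀ α ∈ p.support, 0 < p.coeff α)
    (hqpos : ∀ β ∈ q.support, 0 < q.coeff β)
    (x : Fin d → LaurentSeries ℝ) (hx : ∀ i, x i ≠ 0)
    (hx' : ∀ i, 0 < (x i).coeff (x i).order) :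
    MvPolynomial.aeval x p / MvPolynomial.aeval x q ≠ 0 ∧
      0 < (MvPolynomial.aeval x p / MvPolynomial.aeval x q).coeff
            (MvPolynomial.aeval x p / MvPolynomial.aeval x q).order ∧
      (MvPolynomial.aeval x p / MvPolynomial.aeval x q).order =
        p.support.inf' (MvPolynomial.support_nonempty.mpr hp)
            (fun α => ∑ i, (α i : ℤ) * (x i).order) -
          q.support.inf' (MvPolynomial.support_nonempty.mpr hq)
            (fun β => ∑ i, (β i : ℤ) * (x i).order) :=
  laurent_eval_pos_rational_order_general p q hp hq hppos hqpos x hx'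
end

section
/- (Cartan decomposition for GL_m over ℝ((t)), uniqueness.) Let m ≥ 1, let μ, ν : Fin m → ℤ be dominant (weakly decreasing) functions, and let a₁, b₁, a₂, b₂ be matrices in GL_m(𝒪). If a₁ · diag(t^{μ₀}, …, t^{μ_{m−1}}) · b₁ = a₂ · diag(t^{ν₀}, …, t^{ν_{m−1}}) · b₂, then μ = ν. (Hence any two points of the affine Grassmannian of GL_m determine a unique dominant coweight μ = d(p,q), their distance.) -/
open HahnSeries

/-- A matrix over `𝕂 = ℝ((t))` lies in `GL_m(𝒪)`, where `𝒪 = ℝ[[t]]`, if all its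
entries are power series and the order of its (nonzero) determinant is `0`. -/
def Matrix.memGLO {m : ℕ} (a : Matrix (Fin m) (Fin m) (LaurentSeries ℝ)) : Prop :=
  (∀ i j, a i j ∈ (HahnSeries.ofPowerSeries ℤ ℝ).range) ∧ a.det ≠ 0 ∧ a.det.order = 0

/-!
Write `c = a₂⁻¹ a₁ ∈ GL_m(𝒪)` and `d = b₂ b₁⁻¹`, which has entries in `𝒪`, so that
`c · diag(t^μ) = diag(t^ν) · d`, i.e. `c i j · t^{μ j} = t^{ν i} · d i j`. If `μ k < ν k`, then
for `i ≤ k ≤ j` dominance gives `μ j < ν i`, so `c i j ∈ t𝒪`. The reduction of `c` modulo `t`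
then has a zero block of size `(k + 1) × (m - k)`, hence determinant zero; but this determinant
is the constant coefficient of `det c`, a unit of `𝒪`. So `ν ≤ μ`, and by symmetry `μ = ν`.
-/

theorem Matrix.det_eq_zero_of_eq_zero_of_le_of_le {R : Type*} [CommRing R] {m : ℕ}
    (M : Matrix (Fin m) (Fin m) R) (k : Fin m) (hM : ∀ i j, i ≤ k → k ≤ j → M i j = 0) :
    M.det = 0 := by
  rw [Matrix.det_apply]
  refine Finset.sum_eq_zero fun σ _ => ?_
  obtain ⟨j, hkj, hσj⟩ : ∃ j, k ≤ j ∧ σ j ≤ k := by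
    by_contra! hσ
    have hcard := Finset.card_le_card_of_injOn σ
      (fun j hj => Finset.mem_Ioi.2 (hσ j (Finset.mem_Ici.1 hj))) σ.injective.injOn
    rw [Fin.card_Ici, Fin.card_Ioi] at hcard
    omega
  rw [Finset.prod_eq_zero (f := fun i => M (σ i) i) (Finset.mem_univ j) (hM _ _ hσj hkj),
    smul_zero]

theorem Matrix.mul_diagonal_eq_diagonal_mul_of_mul_diagonal_mul_eq {R n : Type*} [CommRing R]
    [Fintype n] [DecidableEq n] {a₁ b₁ a₂ b₂ : Matrix n n R} {μ ν : n → R}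
    (ha₂ : IsUnit a₂.det) (hb₁ : IsUnit b₁.det)
    (h : a₁ * diagonal μ * b₁ = a₂ * diagonal ν * b₂) :
    a₂⁻¹ * a₁ * diagonal μ = diagonal ν * (b₂ * b₁⁻¹) := by
  calc a₂⁻¹ * a₁ * diagonal μ = a₂⁻¹ * (a₁ * diagonal μ * b₁) * b₁⁻¹ := by
        simp only [Matrix.mul_assoc, Matrix.mul_nonsing_inv _ hb₁, Matrix.mul_one]
    _ = diagonal ν * (b₂ * b₁⁻¹) := by
        simp only [h, ← Matrix.mul_assoc, Matrix.nonsing_inv_mul _ ha₂, Matrix.one_mul]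

namespace LaurentSeries

variable {R : Type*}

theorem coeff_eq_zero_of_mem_range_ofPowerSeries [Ring R] {x : LaurentSeries R}
    (hx : x ∈ (ofPowerSeries ℤ R).range) {n : ℤ} (hn : n < 0) : x.coeff n = 0 := by
  obtain ⟨p, rfl⟩ := hx
  rw [ofPowerSeries_apply]
  refine embDomain_of_notMem_range fun ⟨k, hk⟩ => ?_
  simp only [Nat.castOrderEmbedding_apply] at hk
  omega

theorem mem_range_ofPowerSeries_of_order_nonneg [Ring R] {x : LaurentSeries R}
    (h : 0 ≤ x.order) : x ∈ (ofPowerSeries ℤ R).range := by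
  refine ⟨PowerSeries.X ^ x.order.toNat * x.powerSeriesPart, ?_⟩
  rw [map_mul, ofPowerSeries_X_pow, Int.toNat_of_nonneg h, single_order_mul_powerSeriesPart]

theorem order_inv {K : Type*} [Field K] {x : LaurentSeries K} (hx : x ≠ 0) :
    x⁻¹.order = -x.order := by
  have h := order_mul hx (inv_ne_zero hx)
  rw [mul_inv_cancel₀ hx, order_one] at h
  omega

theorem coeff_zero_eq_zero_of_mul_single_eq_single_mul [Ring R] {x y : LaurentSeries R}
    {a b : ℤ} (hy : y ∈ (ofPowerSeries ℤ R).range) (hab : a < b)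
    (h : x * single a 1 = single b 1 * y) : x.coeff 0 = 0 := by
  have hx : (x * single a 1).coeff (0 + a) = x.coeff 0 := by
    rw [coeff_mul_single_add, mul_one]
  rw [← hx, h, show 0 + a = (a - b) + b by ring, coeff_single_mul_add, one_mul]
  exact coeff_eq_zero_of_mem_range_ofPowerSeries hy (by omega)

theorem exists_eq_map_ofPowerSeries [Ring R] {n : Type*}
    {c : Matrix n n (LaurentSeries R)} (hc : ∀ i j, c i j ∈ (ofPowerSeries ℤ R).range) :
    ∃ C : Matrix n n (PowerSeries R), c = C.map (ofPowerSeries ℤ R) := by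
  choose C hC using hc
  exact ⟨Matrix.of C, Matrix.ext fun i j => (hC i j).symm⟩

theorem coeff_zero_det [CommRing R] {n : Type*} [Fintype n] [DecidableEq n]
    {c : Matrix n n (LaurentSeries R)} (hc : ∀ i j, c i j ∈ (ofPowerSeries ℤ R).range) :
    c.det.coeff 0 = (c.map fun x => x.coeff 0).det := by
  obtain ⟨C, rfl⟩ := exists_eq_map_ofPowerSeries hc
  have hcoeff : (fun x : LaurentSeries R => x.coeff 0) ∘ ofPowerSeries ℤ R =
      PowerSeries.constantCoeff := funext fun p => by
    simpa using ofPowerSeries_apply_coeff (Γ := ℤ) p 0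
  rw [Matrix.map_map, hcoeff, ← RingHom.mapMatrix_apply, ← RingHom.map_det,
    ← RingHom.mapMatrix_apply, ← RingHom.map_det, ← hcoeff, Function.comp_apply]

end LaurentSeries

open LaurentSeries

namespace Matrix.memGLO

variable {m : ℕ} {a b : Matrix (Fin m) (Fin m) (LaurentSeries ℝ)}

theorem mul (ha : a.memGLO) (hb : b.memGLO) : (a * b).memGLO := by
  refine ⟨fun i j => ?_, ?_, ?_⟩
  · rw [Matrix.mul_apply]
    exact Subring.sum_mem _ fun k _ => Subring.mul_mem _ (ha.1 i k) (hb.1 k j)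
  · rw [Matrix.det_mul]
    exact mul_ne_zero ha.2.1 hb.2.1
  · rw [Matrix.det_mul, order_mul ha.2.1 hb.2.1, ha.2.2, hb.2.2, add_zero]

theorem isUnit_det (ha : a.memGLO) : IsUnit a.det :=
  isUnit_iff_ne_zero.mpr ha.2.1

theorem nonsing_inv (ha : a.memGLO) : a⁻¹.memGLO := by
  have hdet : a⁻¹.det = a.det⁻¹ := by rw [Matrix.det_nonsing_inv, Ring.inverse_eq_inv]
  have hord : (a.det⁻¹).order = 0 := by rw [order_inv ha.2.1, ha.2.2, neg_zero]
  refine ⟨fun i j => ?_, hdet ▸ inv_ne_zero ha.2.1, hdet ▸ hord⟩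
  rw [Matrix.inv_def, Ring.inverse_eq_inv, Matrix.smul_apply, smul_eq_mul]
  refine mul_mem (mem_range_ofPowerSeries_of_order_nonneg hord.ge) ?_
  obtain ⟨A, rfl⟩ := exists_eq_map_ofPowerSeries ha.1
  rw [← RingHom.mapMatrix_apply, ← RingHom.map_adjugate]
  exact ⟨A.adjugate i j, rfl⟩

theorem coeff_zero_det_ne_zero (ha : a.memGLO) : a.det.coeff 0 ≠ 0 :=
  ha.2.2 ▸ fun h => ha.2.1 (coeff_order_eq_zero.mp h)

theorem le_of_mul_diagonal_eq_diagonal_mul {c d : Matrix (Fin m) (Fin m) (LaurentSeries ℝ)}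
    {μ ν : Fin m → ℤ} (hμ : Antitone μ) (hν : Antitone ν) (hc : c.memGLO)
    (hd : ∀ i j, d i j ∈ (ofPowerSeries ℤ ℝ).range)
    (h : c * Matrix.diagonal (fun i => (HahnSeries.single (μ i) (1 : ℝ) : LaurentSeries ℝ)) =
      Matrix.diagonal (fun i => (HahnSeries.single (ν i) (1 : ℝ) : LaurentSeries ℝ)) * d) :
    ν ≤ μ := by
  intro k
  by_contra! hk
  have hblock : ∀ i j, i ≤ k → k ≤ j → (c i j).coeff 0 = 0 := fun i j hi hj =>
    coeff_zero_eq_zero_of_mul_single_eq_single_mul (hd i j)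
      ((hμ hj).trans_lt (hk.trans_le (hν hi)))
      (by simpa only [Matrix.mul_diagonal, Matrix.diagonal_mul] using congrFun (congrFun h i) j)
  exact hc.coeff_zero_det_ne_zero <| (coeff_zero_det hc.1).trans <|
    Matrix.det_eq_zero_of_eq_zero_of_le_of_le _ k hblock

end Matrix.memGLO

theorem cartan_decomposition_unique_general {m : ℕ}
    (μ ν : Fin m → ℤ) (hμ : Antitone μ) (hν : Antitone ν)
    (a₁ b₁ a₂ b₂ : Matrix (Fin m) (Fin m) (LaurentSeries ℝ))
    (ha₁ : a₁.memGLO) (hb₁ : b₁.memGLO) (ha₂ : a₂.memGLO) (hb₂ : b₂.memGLO)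
    (h : a₁ * Matrix.diagonal
            (fun i => (HahnSeries.single (μ i) (1 : ℝ) : LaurentSeries ℝ)) * b₁ =
         a₂ * Matrix.diagonal
            (fun i => (HahnSeries.single (ν i) (1 : ℝ) : LaurentSeries ℝ)) * b₂) :
    μ = ν := by
  refine le_antisymm ?_ ?_
  · exact (ha₁.nonsing_inv.mul ha₂).le_of_mul_diagonal_eq_diagonal_mul hν hμ
      (hb₁.mul hb₂.nonsing_inv).1
      (Matrix.mul_diagonal_eq_diagonal_mul_of_mul_diagonal_mul_eq ha₁.isUnit_det
        hb₂.isUnit_det h.symm)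
  · exact (ha₂.nonsing_inv.mul ha₁).le_of_mul_diagonal_eq_diagonal_mul hμ hν
      (hb₂.mul hb₁.nonsing_inv).1
      (Matrix.mul_diagonal_eq_diagonal_mul_of_mul_diagonal_mul_eq ha₂.isUnit_det
        hb₁.isUnit_det h)

/-- Cartan decomposition for `GL_m` over `ℝ((t))`, uniqueness: the dominant coweight
`μ` in a decomposition `g = a · diag(t^{μ}) · b` with `a, b ∈ GL_m(𝒪)` is unique.
Hence two points of the affine Grassmannian of `GL_m` determine a unique dominant
coweight `d(p,q)`, their distance. -/
theorem cartan_decomposition_unique {m : ℕ} (hm : 1 ≤ m)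
    (μ ν : Fin m → ℤ) (hμ : Antitone μ) (hν : Antitone ν)
    (a₁ b₁ a₂ b₂ : Matrix (Fin m) (Fin m) (LaurentSeries ℝ))
    (ha₁ : a₁.memGLO) (hb₁ : b₁.memGLO) (ha₂ : a₂.memGLO) (hb₂ : b₂.memGLO)
    (h : a₁ * Matrix.diagonal
            (fun i => (HahnSeries.single (μ i) (1 : ℝ) : LaurentSeries ℝ)) * b₁ =
         a₂ * Matrix.diagonal
            (fun i => (HahnSeries.single (ν i) (1 : ℝ) : LaurentSeries ℝ)) * b₂) :
    μ = ν :=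
  cartan_decomposition_unique_general μ ν hμ hν a₁ b₁ a₂ b₂ ha₁ hb₁ ha₂ hb₂ h
end
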